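/- (Mid-time proximity under modified slopes.) Assume hypothesis (H2), that Δx ≤ 1, and that sup_{k∈ℤ} ρ_k ≤ C for some C > 0. Then for every j ∈ ℤ, with the modified slopes, |ρ^{½,−}_{j+1/2} − ρ_j| ≤ K̃·(Δx)^δ and |ρ^{½,+}_{j−1/2} − ρ_j| ≤ K̃·(Δx)^δ, where K̃ := ((1 + λ·L)/2)·K + λ·M·C·(1 + θ)·(sup |μ'|)·m. -/

import Mathlib

open MeasureTheory

noncomputable section

/-- minmod limiter of four arguments. -/
def minmod4 (a b c d : ℝ) : ℝ :=
  if 0 < a ∧ 0 < b ∧ 0 < c ∧ 0 < d then min (min a b) (min c d)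
  else if a < 0 ∧ b < 0 ∧ c < 0 ∧ d < 0 then max (max a b) (max c d)
  else 0

/-- modified MUSCL slopes
`σ_j = 2θ·minmod(ρ_j − ρ_{j−1}, (ρ_{j+1} − ρ_{j−1})/2, ρ_{j+1} − ρ_j, sgn(ρ_{j+1} − ρ_j)·K·Δx^δ)`. -/
def slpM (θ K δ Δx : ℝ) (ρ : ℤ → ℝ) (j : ℤ) : ℝ :=
  2 * θ * minmod4 (ρ j - ρ (j - 1)) ((ρ (j + 1) - ρ (j - 1)) / 2) (ρ (j + 1) - ρ j)
    (Real.sign (ρ (j + 1) - ρ j) * K * Δx ^ δ)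

/-- left interface value `ρ⁻_{j+1/2} = ρ_j + σ_j/2` (modified slopes). -/
def intLM (θ K δ Δx : ℝ) (ρ : ℤ → ℝ) (j : ℤ) : ℝ := ρ j + slpM θ K δ Δx ρ j / 2

/-- right interface value `ρ⁺_{j−1/2} = ρ_j − σ_j/2` (modified slopes). -/
def intRM (θ K δ Δx : ℝ) (ρ : ℤ → ℝ) (j : ℤ) : ℝ := ρ j - slpM θ K δ Δx ρ j / 2

/-- discrete convolution `A_j = Δx·Σ_l μ((j−l)Δx)·ρ_l`. -/
def Adisc (μ : ℝ → ℝ) (Δx : ℝ) (ρ : ℤ → ℝ) (j : ℤ) : ℝ :=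
  Δx * ∑' l : ℤ, μ (((j : ℝ) - (l : ℝ)) * Δx) * ρ l

/-- `s_j = θ·(A_{j+1} − A_{j−1})`. -/
def sdisc (μ : ℝ → ℝ) (θ Δx : ℝ) (ρ : ℤ → ℝ) (j : ℤ) : ℝ :=
  θ * (Adisc μ Δx ρ (j + 1) - Adisc μ Δx ρ (j - 1))

/-- `A⁻_{j+1/2} = A_j + s_j/2`. -/
def AdiscL (μ : ℝ → ℝ) (θ Δx : ℝ) (ρ : ℤ → ℝ) (j : ℤ) : ℝ :=
  Adisc μ Δx ρ j + sdisc μ θ Δx ρ j / 2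

/-- `A⁺_{j−1/2} = A_j − s_j/2`. -/
def AdiscR (μ : ℝ → ℝ) (θ Δx : ℝ) (ρ : ℤ → ℝ) (j : ℤ) : ℝ :=
  Adisc μ Δx ρ j - sdisc μ θ Δx ρ j / 2

/-- mid-time value `ρ^{½,−}_{j+1/2}` (modified slopes). -/
def midLM (f : ℝ → ℝ → ℝ) (μ : ℝ → ℝ) (θ K δ lam Δx : ℝ) (ρ : ℤ → ℝ) (j : ℤ) : ℝ :=
  intLM θ K δ Δx ρ j - lam / 2 *
    (f (intLM θ K δ Δx ρ j) (AdiscL μ θ Δx ρ j) - f (intRM θ K δ Δx ρ j) (AdiscR μ θ Δx ρ j))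

/-- mid-time value `ρ^{½,+}_{j−1/2}` (modified slopes). -/
def midRM (f : ℝ → ℝ → ℝ) (μ : ℝ → ℝ) (θ K δ lam Δx : ℝ) (ρ : ℤ → ℝ) (j : ℤ) : ℝ :=
  intRM θ K δ Δx ρ j - lam / 2 *
    (f (intLM θ K δ Δx ρ j) (AdiscL μ θ Δx ρ j) - f (intRM θ K δ Δx ρ j) (AdiscR μ θ Δx ρ j))

/-- mid-time convolution `A^{½}_{j+1/2}` (modified slopes). -/
def AmidM (f : ℝ → ℝ → ℝ) (μ : ℝ → ℝ) (θ K δ lam Δx : ℝ) (ρ : ℤ → ℝ) (j : ℤ) : ℝ :=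
  Δx / 2 * ∑' l : ℤ,
    (μ (((j : ℝ) + 1 - (l : ℝ)) * Δx) * midRM f μ θ K δ lam Δx ρ l +
     μ (((j : ℝ) - (l : ℝ)) * Δx) * midLM f μ θ K δ lam Δx ρ l)

/-- Lax–Friedrichs type numerical flux `F(u,v,A)`. -/
def numFlux (f : ℝ → ℝ → ℝ) (α lam u v A : ℝ) : ℝ :=
  (f u A + f v A) / 2 - α * (v - u) / (2 * lam)

/-- MUSCL–Hancock update `ρ'_j` (modified slopes). -/
def mhUpdateM (f : ℝ → ℝ → ℝ) (μ : ℝ → ℝ) (θ K δ α lam Δx : ℝ) (ρ : ℤ → ℝ) (j : ℤ) : ℝ :=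
  ρ j - lam *
    (numFlux f α lam (midLM f μ θ K δ lam Δx ρ j) (midRM f μ θ K δ lam Δx ρ (j + 1))
        (AmidM f μ θ K δ lam Δx ρ j) -
     numFlux f α lam (midLM f μ θ K δ lam Δx ρ (j - 1)) (midRM f μ θ K δ lam Δx ρ j)
        (AmidM f μ θ K δ lam Δx ρ (j - 1)))

/-! The slope is capped by the limiter at `K·Δx^δ`, so `ρ^{½,±} − ρ_j` is half a slope plus
`λ/2` times a flux jump across the cell. By the mean value theorem that jump is at most
`L·|σ_j|` plus `M·|ρ⁺_{j−1/2}|·|s_j|`, and `|s_j| ≲ θ·sup|μ'|·Δx·m` because neighbouring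
convolution weights differ by `O(Δx)`; finally `Δx ≤ Δx^δ` as `Δx ≤ 1`. -/

lemma abs_minmod4_le_left (a b c d : ℝ) : |minmod4 a b c d| ≤ |a| := by
  unfold minmod4
  split_ifs with hpos hneg
  · obtain ⟨ha, hb, hc, hd⟩ := hpos
    rw [abs_of_pos (lt_min (lt_min ha hb) (lt_min hc hd)), abs_of_pos ha]
    exact (min_le_left _ _).trans (min_le_left _ _)
  · obtain ⟨ha, hb, hc, hd⟩ := hneg
    rw [abs_of_neg (max_lt (max_lt ha hb) (max_lt hc hd)), abs_of_neg ha, neg_le_neg_iff]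
    exact (le_max_left _ _).trans (le_max_left _ _)
  · simp

lemma abs_minmod4_le_right (a b c d : ℝ) : |minmod4 a b c d| ≤ |d| := by
  unfold minmod4
  split_ifs with hpos hneg
  · obtain ⟨ha, hb, hc, hd⟩ := hpos
    rw [abs_of_pos (lt_min (lt_min ha hb) (lt_min hc hd)), abs_of_pos hd]
    exact (min_le_right _ _).trans (min_le_right _ _)
  · obtain ⟨ha, hb, hc, hd⟩ := hneg
    rw [abs_of_neg (max_lt (max_lt ha hb) (max_lt hc hd)), abs_of_neg hd, neg_le_neg_iff]
    exact (le_max_right _ _).trans (le_max_right _ _)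
  · simp

lemma Real.abs_sign_le_one (x : ℝ) : |Real.sign x| ≤ 1 := by
  rcases Real.sign_apply_eq x with h | h | h <;> simp [h]

section Slopes

variable {θ K δ Δx C : ℝ} {ρ : ℤ → ℝ} {j : ℤ}

lemma abs_slpM_le_rpow (hθ : 0 ≤ θ) (hK : 0 ≤ K) (hΔx : 0 ≤ Δx) :
    |slpM θ K δ Δx ρ j| ≤ 2 * θ * (K * Δx ^ δ) := by
  unfold slpM
  rw [abs_mul, abs_of_nonneg (by linarith)]
  refine mul_le_mul_of_nonneg_left ((abs_minmod4_le_right _ _ _ _).trans ?_) (by linarith)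
  rw [abs_mul, abs_mul, abs_of_nonneg hK, abs_of_nonneg (Real.rpow_nonneg hΔx δ), mul_assoc]
  exact mul_le_of_le_one_left (by positivity) (Real.abs_sign_le_one _)

lemma abs_slpM_le_abs_sub (hθ : 0 ≤ θ) :
    |slpM θ K δ Δx ρ j| ≤ 2 * θ * |ρ j - ρ (j - 1)| := by
  unfold slpM
  rw [abs_mul, abs_of_nonneg (by linarith)]
  exact mul_le_mul_of_nonneg_left (abs_minmod4_le_left _ _ _ _) (by linarith)

lemma abs_intRM_le (hθ : 0 ≤ θ) (hρ : ∀ k, 0 ≤ ρ k) (hbd : ∀ k, ρ k ≤ C) :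
    |intRM θ K δ Δx ρ j| ≤ (1 + θ) * C := by
  have hjump : |ρ j - ρ (j - 1)| ≤ C :=
    abs_sub_le_of_nonneg_of_le (hρ j) (hbd j) (hρ (j - 1)) (hbd (j - 1))
  calc |intRM θ K δ Δx ρ j| ≤ |ρ j| + |slpM θ K δ Δx ρ j| / 2 :=
        (abs_sub _ _).trans_eq (by rw [abs_div, abs_two])
    _ ≤ C + 2 * θ * C / 2 := by
        rw [abs_of_nonneg (hρ j)]
        gcongr
        exacts [hbd j, (abs_slpM_le_abs_sub hθ).trans (by gcongr)]
    _ = (1 + θ) * C := by ring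

end Slopes

section PartialDerivatives

variable {𝕜 E F G : Type*} [NontriviallyNormedField 𝕜] [NormedAddCommGroup E] [NormedSpace 𝕜 E]
  [NormedAddCommGroup F] [NormedSpace 𝕜 F] [NormedAddCommGroup G] [NormedSpace 𝕜 G]
  {f : E → F → G}

lemma Differentiable.uncurry_left (hf : Differentiable 𝕜 (Function.uncurry f)) (y : F) :
    Differentiable 𝕜 fun x => f x y := fun x => by
  exact (hf (x, y)).comp x (differentiableAt_id.prodMk (𝕜 := 𝕜) (differentiableAt_const y))

lemma Differentiable.uncurry_right (hf : Differentiable 𝕜 (Function.uncurry f)) (x : E) :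
    Differentiable 𝕜 (f x) := fun y => by
  exact (hf (x, y)).comp y ((differentiableAt_const x).prodMk (𝕜 := 𝕜) differentiableAt_id)

end PartialDerivatives

lemma abs_sub_le_of_abs_deriv_le {g : ℝ → ℝ} {C : ℝ} (hg : Differentiable ℝ g)
    (hC : ∀ x, |deriv g x| ≤ C) (x y : ℝ) : |g x - g y| ≤ C * |x - y| := by
  simpa only [Real.norm_eq_abs] using convex_univ.norm_image_sub_le_of_norm_deriv_le
    (fun z _ => hg z) (fun z _ => hC z) (Set.mem_univ y) (Set.mem_univ x)

lemma abs_sub_le_of_abs_partial_deriv_le {f : ℝ → ℝ → ℝ} {L M : ℝ}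
    (hf : Differentiable ℝ (Function.uncurry f))
    (hL : ∀ r A, |deriv (fun x => f x A) r| ≤ L) (hM : ∀ r A, |deriv (f r) A| ≤ M * |r|)
    (u v A B : ℝ) : |f u A - f v B| ≤ L * |u - v| + M * |v| * |A - B| :=
  calc |f u A - f v B| = |(f u A - f v A) + (f v A - f v B)| := by ring_nf
    _ ≤ |f u A - f v A| + |f v A - f v B| := abs_add_le _ _
    _ ≤ L * |u - v| + M * |v| * |A - B| :=
        add_le_add (abs_sub_le_of_abs_deriv_le (hf.uncurry_left A) (hL · A) u v)
          (abs_sub_le_of_abs_deriv_le (hf.uncurry_right v) (hM v) A B)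

section Convolution

variable {μ : ℝ → ℝ} {θ Δx Cμ' : ℝ} {ρ : ℤ → ℝ}

lemma summable_mul_of_abs_le {ι : Type*} {g ρ : ι → ℝ} {B : ℝ} (hg : ∀ i, |g i| ≤ B)
    (hρ : ∀ i, 0 ≤ ρ i) (hsum : Summable ρ) : Summable fun i => g i * ρ i :=
  (hsum.mul_left B).of_norm_bounded fun i => by
    rw [Real.norm_eq_abs, abs_mul, abs_of_nonneg (hρ i)]
    exact mul_le_mul_of_nonneg_right (hg i) (hρ i)

lemma abs_Adisc_sub_le (hμ : Continuous μ) (hμc : HasCompactSupport μ)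
    (hlip : ∀ x y, |μ x - μ y| ≤ Cμ' * |x - y|) (hΔx : 0 ≤ Δx) (hρ : ∀ l, 0 ≤ ρ l)
    (hsum : Summable ρ) (i k : ℤ) :
    |Adisc μ Δx ρ i - Adisc μ Δx ρ k| ≤ Cμ' * (|(i : ℝ) - k| * Δx) * (Δx * ∑' l : ℤ, ρ l) := by
  obtain ⟨B, hB⟩ := hμc.exists_bound_of_continuous hμ
  have hs (n : ℤ) : Summable fun l : ℤ => μ ((n - l) * Δx) * ρ l :=
    summable_mul_of_abs_le (fun l => hB _) hρ hsum
  have hterm (l : ℤ) : ‖(μ ((i - l) * Δx) - μ ((k - l) * Δx)) * ρ l‖ ≤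
      Cμ' * (|(i : ℝ) - k| * Δx) * ρ l := by
    rw [Real.norm_eq_abs, abs_mul, abs_of_nonneg (hρ l)]
    refine mul_le_mul_of_nonneg_right ?_ (hρ l)
    calc _ ≤ Cμ' * |(i - l) * Δx - (k - l) * Δx| := hlip _ _
      _ = Cμ' * (|(i : ℝ) - k| * Δx) := by rw [← sub_mul, abs_mul, abs_of_nonneg hΔx]; ring_nf
  have hbound := tsum_of_norm_bounded (hsum.hasSum.mul_left _) hterm
  unfold Adisc
  rw [← mul_sub, ← (hs i).tsum_sub (hs k), abs_mul, abs_of_nonneg hΔx]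
  simp only [← sub_mul]
  calc Δx * |∑' l : ℤ, (μ ((i - l) * Δx) - μ ((k - l) * Δx)) * ρ l|
      ≤ Δx * (Cμ' * (|(i : ℝ) - k| * Δx) * ∑' l : ℤ, ρ l) := by gcongr; exact hbound
    _ = Cμ' * (|(i : ℝ) - k| * Δx) * (Δx * ∑' l, ρ l) := by ring

lemma abs_sdisc_le (hθ : 0 ≤ θ) (hμ : Continuous μ) (hμc : HasCompactSupport μ)
    (hlip : ∀ x y, |μ x - μ y| ≤ Cμ' * |x - y|) (hΔx : 0 ≤ Δx) (hρ : ∀ l, 0 ≤ ρ l)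
    (hsum : Summable ρ) (j : ℤ) :
    |sdisc μ θ Δx ρ j| ≤ θ * (Cμ' * (2 * Δx) * (Δx * ∑' l : ℤ, ρ l)) := by
  have h := abs_Adisc_sub_le hμ hμc hlip hΔx hρ hsum (j + 1) (j - 1)
  rw [show |(((j + 1 : ℤ) : ℝ) - ((j - 1 : ℤ) : ℝ))| = 2 by norm_num] at h
  unfold sdisc
  rw [abs_mul, abs_of_nonneg hθ]
  gcongr

end Convolution

section MidTime

variable {f : ℝ → ℝ → ℝ} {μ : ℝ → ℝ} {θ K δ lam Δx : ℝ} {ρ : ℤ → ℝ} {j : ℤ}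

def fluxJump (f : ℝ → ℝ → ℝ) (μ : ℝ → ℝ) (θ K δ Δx : ℝ) (ρ : ℤ → ℝ) (j : ℤ) : ℝ :=
  f (intLM θ K δ Δx ρ j) (AdiscL μ θ Δx ρ j) - f (intRM θ K δ Δx ρ j) (AdiscR μ θ Δx ρ j)

lemma midLM_sub_self :
    midLM f μ θ K δ lam Δx ρ j - ρ j =
      slpM θ K δ Δx ρ j / 2 - lam / 2 * fluxJump f μ θ K δ Δx ρ j := by
  change intLM θ K δ Δx ρ j - lam / 2 * fluxJump f μ θ K δ Δx ρ j - ρ j = _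
  rw [intLM]
  ring

lemma midRM_sub_self :
    midRM f μ θ K δ lam Δx ρ j - ρ j =
      -(slpM θ K δ Δx ρ j / 2) - lam / 2 * fluxJump f μ θ K δ Δx ρ j := by
  change intRM θ K δ Δx ρ j - lam / 2 * fluxJump f μ θ K δ Δx ρ j - ρ j = _
  rw [intRM]
  ring

lemma abs_midLM_sub_le (hlam : 0 ≤ lam) :
    |midLM f μ θ K δ lam Δx ρ j - ρ j| ≤
      |slpM θ K δ Δx ρ j| / 2 + lam / 2 * |fluxJump f μ θ K δ Δx ρ j| := by
  rw [midLM_sub_self]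
  refine (abs_sub _ _).trans_eq ?_
  rw [abs_div, abs_two, abs_mul, abs_of_nonneg (by positivity : 0 ≤ lam / 2)]

lemma abs_midRM_sub_le (hlam : 0 ≤ lam) :
    |midRM f μ θ K δ lam Δx ρ j - ρ j| ≤
      |slpM θ K δ Δx ρ j| / 2 + lam / 2 * |fluxJump f μ θ K δ Δx ρ j| := by
  rw [midRM_sub_self]
  refine (abs_sub _ _).trans_eq ?_
  rw [abs_neg, abs_div, abs_two, abs_mul, abs_of_nonneg (by positivity : 0 ≤ lam / 2)]

lemma abs_fluxJump_le {L M : ℝ} (hf : Differentiable ℝ (Function.uncurry f))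
    (hL : ∀ r A, |deriv (fun x => f x A) r| ≤ L) (hM : ∀ r A, |deriv (f r) A| ≤ M * |r|) :
    |fluxJump f μ θ K δ Δx ρ j| ≤
      L * |slpM θ K δ Δx ρ j| + M * |intRM θ K δ Δx ρ j| * |sdisc μ θ Δx ρ j| := by
  have h := abs_sub_le_of_abs_partial_deriv_le hf hL hM (intLM θ K δ Δx ρ j)
    (intRM θ K δ Δx ρ j) (AdiscL μ θ Δx ρ j) (AdiscR μ θ Δx ρ j)
  rwa [show intLM θ K δ Δx ρ j - intRM θ K δ Δx ρ j = slpM θ K δ Δx ρ j by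
      unfold intLM intRM; ring,
    show AdiscL μ θ Δx ρ j - AdiscR μ θ Δx ρ j = sdisc μ θ Δx ρ j by
      unfold AdiscL AdiscR; ring] at h

end MidTime

theorem stmt17_general (f : ℝ → ℝ → ℝ) (μ : ℝ → ℝ) (Δx Δt lam θ K δ L M Cμ' C : ℝ)
    (hΔx : 0 < Δx) (hΔt : 0 < Δt) (hlam : lam = Δt / Δx)
    (hΔx1 : Δx ≤ 1)
    (hθ0 : 0 ≤ θ) (hθ1 : θ ≤ 1 / 2) (hK : 0 < K) (hδ1 : δ < 1)
    (hf : ContDiff ℝ 2 (Function.uncurry f))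
    (hL : ∀ r A : ℝ, |deriv (fun x => f x A) r| ≤ L)
    (hM : 0 < M) (hdA : ∀ r a : ℝ, |deriv (f r) a| ≤ M * |r|)
    (hμ : ContDiff ℝ 2 μ) (hμc : HasCompactSupport μ)
    (hCμ' : ∀ x : ℝ, |deriv μ x| ≤ Cμ')
    (ρ : ℤ → ℝ) (hρ : ∀ j : ℤ, 0 ≤ ρ j) (hsum : Summable ρ)
    (hbd : ∀ k : ℤ, ρ k ≤ C) (j : ℤ) :
    |midLM f μ θ K δ lam Δx ρ j - ρ j| ≤
      ((1 + lam * L) / 2 * K + lam * M * C * (1 + θ) * Cμ' * (Δx * ∑' l : ℤ, ρ l)) *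
        Δx ^ δ ∧
    |midRM f μ θ K δ lam Δx ρ j - ρ j| ≤
      ((1 + lam * L) / 2 * K + lam * M * C * (1 + θ) * Cμ' * (Δx * ∑' l : ℤ, ρ l)) *
        Δx ^ δ := by
  set X := Δx ^ δ
  set m := Δx * ∑' l : ℤ, ρ l
  have hlam0 : 0 ≤ lam := hlam ▸ by positivity
  have hL0 : 0 ≤ L := (abs_nonneg _).trans (hL 0 0)
  have hC0 : 0 ≤ C := (hρ j).trans (hbd j)
  have hCμ0 : 0 ≤ Cμ' := (abs_nonneg _).trans (hCμ' 0)
  have hm : 0 ≤ m := mul_nonneg hΔx.le (tsum_nonneg hρ)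
  have hΔxX : Δx ≤ X := Real.self_le_rpow_of_le_one hΔx.le hΔx1 hδ1.le
  have hσ : |slpM θ K δ Δx ρ j| ≤ K * X := (abs_slpM_le_rpow hθ0 hK.le hΔx.le).trans
    (mul_le_of_le_one_left (by positivity) (by linarith))
  have hs := abs_sdisc_le hθ0 hμ.continuous hμc
    (abs_sub_le_of_abs_deriv_le (hμ.differentiable (by norm_num)) hCμ') hΔx.le hρ hsum j
  have hD : |fluxJump f μ θ K δ Δx ρ j| ≤ (L * K + M * C * (1 + θ) * Cμ' * m) * X :=
    calc _ ≤ L * |slpM θ K δ Δx ρ j| + M * |intRM θ K δ Δx ρ j| * |sdisc μ θ Δx ρ j| :=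
          abs_fluxJump_le (hf.differentiable (by norm_num)) hL hdA
      _ ≤ L * (K * X) + M * ((1 + θ) * C) * (θ * (Cμ' * (2 * Δx) * m)) := by
          gcongr; exact abs_intRM_le hθ0 hρ hbd
      _ = L * K * X + M * C * (1 + θ) * Cμ' * m * (2 * θ * Δx) := by ring
      _ ≤ L * K * X + M * C * (1 + θ) * Cμ' * m * X := by
          gcongr; exact (mul_le_of_le_one_left hΔx.le (by linarith)).trans hΔxX
      _ = _ := by ring
  have hmid : |slpM θ K δ Δx ρ j| / 2 + lam / 2 * |fluxJump f μ θ K δ Δx ρ j| ≤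
      ((1 + lam * L) / 2 * K + lam * M * C * (1 + θ) * Cμ' * m) * X := by
    have : 0 ≤ lam * (M * C * (1 + θ) * Cμ' * m) * X := by positivity
    calc _ ≤ K * X / 2 + lam / 2 * ((L * K + M * C * (1 + θ) * Cμ' * m) * X) := by gcongr
      _ ≤ _ := by linarith
  exact ⟨(abs_midLM_sub_le hlam0).trans hmid, (abs_midRM_sub_le hlam0).trans hmid⟩

/-- mid-time proximity under the modified slopes. -/
theorem stmt17 (f : ℝ → ℝ → ℝ) (μ : ℝ → ℝ) (Δx Δt lam θ K δ L M Cμ' C : ℝ)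
    (hΔx : 0 < Δx) (hΔt : 0 < Δt) (hlam : lam = Δt / Δx)
    (hΔx1 : Δx ≤ 1)
    (hθ0 : 0 ≤ θ) (hθ1 : θ ≤ 1 / 2) (hK : 0 < K) (hδ0 : 0 < δ) (hδ1 : δ < 1)
    (hf : ContDiff ℝ 2 (Function.uncurry f)) (hf0 : ∀ A : ℝ, f 0 A = 0)
    (hL : ∀ r A : ℝ, |deriv (fun x => f x A) r| ≤ L)
    (hM : 0 < M) (hdA : ∀ r a : ℝ, |deriv (f r) a| ≤ M * |r|)
    (hdAA : ∀ r a : ℝ, |iteratedDeriv 2 (f r) a| ≤ M * |r|)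
    (hμ : ContDiff ℝ 2 μ) (hμc : HasCompactSupport μ)
    (hCμ' : ∀ x : ℝ, |deriv μ x| ≤ Cμ')
    (ρ : ℤ → ℝ) (hρ : ∀ j : ℤ, 0 ≤ ρ j) (hsum : Summable ρ)
    (hC : 0 < C) (hbd : ∀ k : ℤ, ρ k ≤ C) (j : ℤ) :
    |midLM f μ θ K δ lam Δx ρ j - ρ j| ≤
      ((1 + lam * L) / 2 * K + lam * M * C * (1 + θ) * Cμ' * (Δx * ∑' l : ℤ, ρ l)) *
        Δx ^ δ ∧
    |midRM f μ θ K δ lam Δx ρ j - ρ j| ≤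
      ((1 + lam * L) / 2 * K + lam * M * C * (1 + θ) * Cμ' * (Δx * ∑' l : ℤ, ρ l)) *
        Δx ^ δ :=
  stmt17_general f μ Δx Δt lam θ K δ L M Cμ' C hΔx hΔt hlam hΔx1 hθ0 hθ1 hK hδ1 hf hL hM hdA hμ hμc
    hCμ' ρ hρ hsum hbd j
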